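/- For functions g_1,…,g_K, g ∈ L^∞(𝒳, μ) with Σ_{k=1}^K |g_k|² = |g|² pointwise a.e., and any bounded operator W on L²(𝒳, μ), one has Σ_{k=1}^K ‖W ĝ_k‖_μ² = ‖W ĝ‖_μ², where ĥ denotes multiplication by h. -/

import Mathlib

open MeasureTheory

namespace MuNorm

variable {𝒳 : Type*} [MeasurableSpace 𝒳]

/-- A finite measurable partition of `𝒳` (up to measure zero). -/
structure Partition (μ : Measure 𝒳) where
  J : ℕ
  Y : Fin J → Set 𝒳
  meas : ∀ j, MeasurableSet (Y j)
  cover : μ (Set.univ \ ⋃ j, Y j) = 0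
  disj : ∀ j k, j ≠ k → μ (Y j ∩ Y k) = 0

/-- `ℳ_χ(W) = ∑_j μ(Y_j) ‖W π_{Y_j}‖²`. -/
noncomputable def M (μ : Measure 𝒳)
    (proj : Set 𝒳 → (Lp ℂ 2 μ →L[ℂ] Lp ℂ 2 μ))
    (W : Lp ℂ 2 μ →L[ℂ] Lp ℂ 2 μ) (χ : Partition μ) : ℝ :=
  ∑ j, (μ (χ.Y j)).toReal * ‖W.comp (proj (χ.Y j))‖ ^ 2

/-- `‖W‖_μ = inf_χ sqrt(ℳ_χ(W))`. -/
noncomputable def munorm (μ : Measure 𝒳)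
    (proj : Set 𝒳 → (Lp ℂ 2 μ →L[ℂ] Lp ℂ 2 μ))
    (W : Lp ℂ 2 μ →L[ℂ] Lp ℂ 2 μ) : ℝ :=
  ⨅ χ : Partition μ, Real.sqrt (M μ proj W χ)

/-- `proj Y` is the operator of multiplication by the indicator of `Y`. -/
def IsIndicatorProj (μ : Measure 𝒳)
    (proj : Set 𝒳 → (Lp ℂ 2 μ →L[ℂ] Lp ℂ 2 μ)) : Prop :=
  ∀ Y : Set 𝒳, MeasurableSet Y → ∀ f : Lp ℂ 2 μ,
    (proj Y f : 𝒳 → ℂ) =ᵐ[μ] Y.indicator f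


section Aux

variable {μ : Measure 𝒳} {proj : Set 𝒳 → (Lp ℂ 2 μ →L[ℂ] Lp ℂ 2 μ)}

lemma norm_proj_apply_le (hproj : IsIndicatorProj μ proj) {Y : Set 𝒳}
    (hY : MeasurableSet Y) (f : Lp ℂ 2 μ) : ‖proj Y f‖ ≤ ‖f‖ := by
  rw [Lp.norm_def, Lp.norm_def]
  refine ENNReal.toReal_mono (Lp.eLpNorm_ne_top f) ?_
  rw [eLpNorm_congr_ae (hproj Y hY f)]
  exact eLpNorm_mono_ae (Filter.Eventually.of_forall fun x => norm_indicator_le_norm_self f x)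

lemma norm_comp_proj_le (hproj : IsIndicatorProj μ proj) {Y : Set 𝒳}
    (hY : MeasurableSet Y) (T : Lp ℂ 2 μ →L[ℂ] Lp ℂ 2 μ) :
    ‖T.comp (proj Y)‖ ≤ ‖T‖ := by
  refine ContinuousLinearMap.opNorm_le_bound _ (norm_nonneg T) fun f => ?_
  calc ‖T (proj Y f)‖ ≤ ‖T‖ * ‖proj Y f‖ := T.le_opNorm _
  _ ≤ ‖T‖ * ‖f‖ := by
      exact mul_le_mul_of_nonneg_left (norm_proj_apply_le hproj hY f) (norm_nonneg T)

lemma proj_comp_proj (hproj : IsIndicatorProj μ proj) {Y Z : Set 𝒳}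
    (hY : MeasurableSet Y) (hZ : MeasurableSet Z) :
    (proj Y).comp (proj Z) = proj (Y ∩ Z) := by
  refine ContinuousLinearMap.ext fun f => Lp.ext ?_
  filter_upwards [hproj Y hY (proj Z f), hproj Z hZ f, hproj (Y ∩ Z) (hY.inter hZ) f]
    with x e1 e2 e3
  rw [ContinuousLinearMap.comp_apply, e1, e3, ← Set.indicator_indicator]
  by_cases hx : x ∈ Y
  · rw [Set.indicator_of_mem hx, Set.indicator_of_mem hx, e2]
  · rw [Set.indicator_of_notMem hx, Set.indicator_of_notMem hx]

lemma proj_of_null (hproj : IsIndicatorProj μ proj) {Y : Set 𝒳}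
    (hY : MeasurableSet Y) (h0 : μ Y = 0) : proj Y = 0 := by
  refine ContinuousLinearMap.ext fun f => Lp.ext ?_
  filter_upwards [hproj Y hY f, Lp.coeFn_zero (E := ℂ) (p := 2) (μ := μ),
    measure_eq_zero_iff_ae_notMem.mp h0] with x e1 e2 e3
  rw [e1, Set.indicator_of_notMem e3, ContinuousLinearMap.zero_apply, e2]
  rfl

lemma sum_measure_inter (χ : Partition μ) {Y : Set 𝒳} (hY : MeasurableSet Y) :
    ∑ j, μ (Y ∩ χ.Y j) = μ Y := by
  have hd : Set.Pairwise (↑(Finset.univ : Finset (Fin χ.J)))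
      (Function.onFun (MeasureTheory.AEDisjoint μ) fun j => Y ∩ χ.Y j) := by
    intro j _ k _ hjk
    simp only [Function.onFun, MeasureTheory.AEDisjoint]
    refine measure_mono_null ?_ (χ.disj j k hjk)
    intro x hx
    exact ⟨hx.1.2, hx.2.2⟩
  have hm : ∀ j ∈ (Finset.univ : Finset (Fin χ.J)),
      NullMeasurableSet (Y ∩ χ.Y j) μ :=
    fun j _ => (hY.inter (χ.meas j)).nullMeasurableSet
  have h1 := measure_biUnion_finset₀ hd hm
  simp only [Finset.mem_univ, Set.iUnion_true] at h1
  rw [← h1]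
  refine le_antisymm (measure_mono (Set.iUnion_subset fun j => Set.inter_subset_left)) ?_
  have hsub : Y ⊆ (⋃ j, Y ∩ χ.Y j) ∪ (Set.univ \ ⋃ j, χ.Y j) := by
    intro x hx
    by_cases h : ∃ j, x ∈ χ.Y j
    · obtain ⟨j, hj⟩ := h
      exact Or.inl (Set.mem_iUnion.2 ⟨j, hx, hj⟩)
    · exact Or.inr ⟨trivial, fun hmem => h (Set.mem_iUnion.mp hmem)⟩
  calc μ Y ≤ μ ((⋃ j, Y ∩ χ.Y j) ∪ (Set.univ \ ⋃ j, χ.Y j)) := measure_mono hsub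
  _ ≤ μ (⋃ j, Y ∩ χ.Y j) + μ (Set.univ \ ⋃ j, χ.Y j) := measure_union_le _ _
  _ = μ (⋃ j, Y ∩ χ.Y j) := by rw [χ.cover, add_zero]

lemma sum_measure_inter_toReal [IsFiniteMeasure μ] (χ : Partition μ) {Y : Set 𝒳}
    (hY : MeasurableSet Y) : ∑ j, (μ (Y ∩ χ.Y j)).toReal = (μ Y).toReal := by
  rw [← ENNReal.toReal_sum (fun j _ => measure_ne_top μ _), sum_measure_inter χ hY]

lemma sum_measure_toReal [IsProbabilityMeasure μ] (χ : Partition μ) :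
    ∑ j, (μ (χ.Y j)).toReal = 1 := by
  have := sum_measure_inter_toReal χ (MeasurableSet.univ (α := 𝒳))
  simpa using this

/-- The trivial partition. -/
def ptriv (μ : Measure 𝒳) : Partition μ where
  J := 1
  Y := fun _ => Set.univ
  meas := fun _ => MeasurableSet.univ
  cover := by rw [Set.iUnion_const]; simp
  disj := fun j k h => absurd (Subsingleton.elim j k) h

instance (μ : Measure 𝒳) : Nonempty (Partition μ) := ⟨ptriv μ⟩

lemma M_nonneg (W : Lp ℂ 2 μ →L[ℂ] Lp ℂ 2 μ) (χ : Partition μ) : 0 ≤ M μ proj W χ :=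
  Finset.sum_nonneg fun j _ => mul_nonneg ENNReal.toReal_nonneg (by positivity)

lemma munorm_nonneg (W : Lp ℂ 2 μ →L[ℂ] Lp ℂ 2 μ) : 0 ≤ munorm μ proj W :=
  Real.iInf_nonneg fun _ => Real.sqrt_nonneg _

lemma munorm_le_sqrt (W : Lp ℂ 2 μ →L[ℂ] Lp ℂ 2 μ) (χ : Partition μ) :
    munorm μ proj W ≤ Real.sqrt (M μ proj W χ) :=
  ciInf_le ⟨0, fun _ ⟨_, h⟩ => h ▸ Real.sqrt_nonneg _⟩ χ

lemma munorm_sq_le (W : Lp ℂ 2 μ →L[ℂ] Lp ℂ 2 μ) (χ : Partition μ) :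
    munorm μ proj W ^ 2 ≤ M μ proj W χ := by
  calc munorm μ proj W ^ 2 ≤ Real.sqrt (M μ proj W χ) ^ 2 :=
        pow_le_pow_left₀ (munorm_nonneg W) (munorm_le_sqrt W χ) 2
  _ = M μ proj W χ := Real.sq_sqrt (M_nonneg W χ)

lemma le_munorm_sq {W : Lp ℂ 2 μ →L[ℂ] Lp ℂ 2 μ} {b : ℝ}
    (h : ∀ χ, b ≤ M μ proj W χ) : b ≤ munorm μ proj W ^ 2 := by
  rcases le_or_gt b 0 with hb | hb
  · exact hb.trans (by positivity)
  · have h1 : Real.sqrt b ≤ munorm μ proj W :=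
      le_ciInf fun χ => Real.sqrt_le_sqrt (h χ)
    calc b = Real.sqrt b ^ 2 := (Real.sq_sqrt hb.le).symm
    _ ≤ munorm μ proj W ^ 2 := pow_le_pow_left₀ (Real.sqrt_nonneg b) h1 2

lemma exists_M_lt (W : Lp ℂ 2 μ →L[ℂ] Lp ℂ 2 μ) {η : ℝ} (hη : 0 < η) :
    ∃ χ, M μ proj W χ < munorm μ proj W ^ 2 + η := by
  by_contra hcon
  push_neg at hcon
  have := le_munorm_sq hcon
  linarith

end Aux


section Combine

variable {μ : Measure 𝒳} {proj : Set 𝒳 → (Lp ℂ 2 μ →L[ℂ] Lp ℂ 2 μ)}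

/-- Common refinement of two partitions. -/
def combine (χ ζ : Partition μ) : Partition μ where
  J := χ.J * ζ.J
  Y i := χ.Y (finProdFinEquiv.symm i).1 ∩ ζ.Y (finProdFinEquiv.symm i).2
  meas i := (χ.meas _).inter (ζ.meas _)
  cover := by
    have he : (⋃ i, χ.Y (finProdFinEquiv.symm i).1 ∩ ζ.Y (finProdFinEquiv.symm i).2)
        = (⋃ j, χ.Y j) ∩ (⋃ j, ζ.Y j) := by
      ext x
      simp only [Set.mem_iUnion, Set.mem_inter_iff]
      constructor
      · rintro ⟨i, h1, h2⟩
        exact ⟨⟨_, h1⟩, ⟨_, h2⟩⟩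
      · rintro ⟨⟨j1, h1⟩, ⟨j2, h2⟩⟩
        refine ⟨finProdFinEquiv (j1, j2), ?_, ?_⟩
        · rw [Equiv.symm_apply_apply]; exact h1
        · rw [Equiv.symm_apply_apply]; exact h2
    rw [he, Set.diff_inter]
    exact measure_union_null χ.cover ζ.cover
  disj i k h := by
    have hne : finProdFinEquiv.symm i ≠ finProdFinEquiv.symm k :=
      fun hc => h (finProdFinEquiv.symm.injective hc)
    rcases Prod.mk.injEq _ _ _ _ ▸ (fun hc => hne hc : ¬ _) |> not_and_or.mp with h1 | h1
    · refine measure_mono_null ?_ (χ.disj _ _ h1)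
      intro x hx; exact ⟨hx.1.1, hx.2.1⟩
    · refine measure_mono_null ?_ (ζ.disj _ _ h1)
      intro x hx; exact ⟨hx.1.2, hx.2.2⟩

lemma norm_comp_proj_inter_left (hproj : IsIndicatorProj μ proj)
    {A B : Set 𝒳} (hA : MeasurableSet A) (hB : MeasurableSet B)
    (T : Lp ℂ 2 μ →L[ℂ] Lp ℂ 2 μ) :
    ‖T.comp (proj (A ∩ B))‖ ≤ ‖T.comp (proj A)‖ := by
  have h1 : (T.comp (proj A)).comp (proj (A ∩ B)) = T.comp (proj (A ∩ B)) := by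
    rw [ContinuousLinearMap.comp_assoc, proj_comp_proj hproj hA (hA.inter hB),
      ← Set.inter_assoc, Set.inter_self]
  rw [← h1]
  exact norm_comp_proj_le hproj (hA.inter hB) _

lemma norm_comp_proj_inter_right (hproj : IsIndicatorProj μ proj)
    {A B : Set 𝒳} (hA : MeasurableSet A) (hB : MeasurableSet B)
    (T : Lp ℂ 2 μ →L[ℂ] Lp ℂ 2 μ) :
    ‖T.comp (proj (A ∩ B))‖ ≤ ‖T.comp (proj B)‖ := by
  have h2 : B ∩ (A ∩ B) = A ∩ B :=
    Set.inter_eq_self_of_subset_right Set.inter_subset_right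
  have h1 : (T.comp (proj B)).comp (proj (A ∩ B)) = T.comp (proj (A ∩ B)) := by
    rw [ContinuousLinearMap.comp_assoc, proj_comp_proj hproj hB (hA.inter hB), h2]
  rw [← h1]
  exact norm_comp_proj_le hproj (hA.inter hB) _

variable [IsProbabilityMeasure μ]

lemma M_combine_le_left (hproj : IsIndicatorProj μ proj)
    (T : Lp ℂ 2 μ →L[ℂ] Lp ℂ 2 μ) (χ ζ : Partition μ) :
    M μ proj T (combine χ ζ) ≤ M μ proj T χ := by
  have hM : M μ proj T (combine χ ζ) = ∑ p : Fin χ.J × Fin ζ.J,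
      (μ (χ.Y p.1 ∩ ζ.Y p.2)).toReal * ‖T.comp (proj (χ.Y p.1 ∩ ζ.Y p.2))‖ ^ 2 :=
    Equiv.sum_comp finProdFinEquiv.symm
      (fun p => (μ (χ.Y p.1 ∩ ζ.Y p.2)).toReal * ‖T.comp (proj (χ.Y p.1 ∩ ζ.Y p.2))‖ ^ 2)
  rw [hM, Fintype.sum_prod_type]
  refine Finset.sum_le_sum fun j1 _ => ?_
  calc ∑ j2, (μ (χ.Y j1 ∩ ζ.Y j2)).toReal * ‖T.comp (proj (χ.Y j1 ∩ ζ.Y j2))‖ ^ 2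
      ≤ ∑ j2, (μ (χ.Y j1 ∩ ζ.Y j2)).toReal * ‖T.comp (proj (χ.Y j1))‖ ^ 2 := by
        refine Finset.sum_le_sum fun j2 _ => ?_
        refine mul_le_mul_of_nonneg_left ?_ ENNReal.toReal_nonneg
        exact pow_le_pow_left₀ (norm_nonneg _)
          (norm_comp_proj_inter_left hproj (χ.meas j1) (ζ.meas j2) T) 2
  _ = (μ (χ.Y j1)).toReal * ‖T.comp (proj (χ.Y j1))‖ ^ 2 := by
        rw [← Finset.sum_mul, sum_measure_inter_toReal ζ (χ.meas j1)]

lemma M_combine_le_right (hproj : IsIndicatorProj μ proj)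
    (T : Lp ℂ 2 μ →L[ℂ] Lp ℂ 2 μ) (χ ζ : Partition μ) :
    M μ proj T (combine χ ζ) ≤ M μ proj T ζ := by
  have hM : M μ proj T (combine χ ζ) = ∑ p : Fin χ.J × Fin ζ.J,
      (μ (χ.Y p.1 ∩ ζ.Y p.2)).toReal * ‖T.comp (proj (χ.Y p.1 ∩ ζ.Y p.2))‖ ^ 2 :=
    Equiv.sum_comp finProdFinEquiv.symm
      (fun p => (μ (χ.Y p.1 ∩ ζ.Y p.2)).toReal * ‖T.comp (proj (χ.Y p.1 ∩ ζ.Y p.2))‖ ^ 2)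
  rw [hM, Fintype.sum_prod_type_right]
  refine Finset.sum_le_sum fun j2 _ => ?_
  calc ∑ j1, (μ (χ.Y j1 ∩ ζ.Y j2)).toReal * ‖T.comp (proj (χ.Y j1 ∩ ζ.Y j2))‖ ^ 2
      ≤ ∑ j1, (μ (χ.Y j1 ∩ ζ.Y j2)).toReal * ‖T.comp (proj (ζ.Y j2))‖ ^ 2 := by
        refine Finset.sum_le_sum fun j1 _ => ?_
        refine mul_le_mul_of_nonneg_left ?_ ENNReal.toReal_nonneg
        exact pow_le_pow_left₀ (norm_nonneg _)
          (norm_comp_proj_inter_right hproj (χ.meas j1) (ζ.meas j2) T) 2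
  _ = (μ (ζ.Y j2)).toReal * ‖T.comp (proj (ζ.Y j2))‖ ^ 2 := by
        have : ∀ j1, (μ (χ.Y j1 ∩ ζ.Y j2)).toReal = (μ (ζ.Y j2 ∩ χ.Y j1)).toReal := by
          intro j1; rw [Set.inter_comm]
        simp_rw [this]
        rw [← Finset.sum_mul, sum_measure_inter_toReal χ (ζ.meas j2)]

/-- `ρ` refines `χ`: every piece of `ρ` is contained in some piece of `χ`. -/
def Subord (ρ χ : Partition μ) : Prop := ∀ i, ∃ j, ρ.Y i ⊆ χ.Y j

lemma subord_refl (χ : Partition μ) : Subord χ χ := fun i => ⟨i, subset_rfl⟩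

lemma subord_trans {ρ χ ξ : Partition μ} (h1 : Subord ρ χ) (h2 : Subord χ ξ) :
    Subord ρ ξ := by
  intro i
  obtain ⟨j, hj⟩ := h1 i
  obtain ⟨l, hl⟩ := h2 j
  exact ⟨l, hj.trans hl⟩

lemma subord_combine_left (χ ζ : Partition μ) : Subord (combine χ ζ) χ :=
  fun i => ⟨(finProdFinEquiv.symm i).1, Set.inter_subset_left⟩

lemma exists_common (hproj : IsIndicatorProj μ proj) {ι : Type*} [DecidableEq ι]
    (χ : Partition μ) (s : Finset ι) (P : ι → Partition μ) :
    ∃ ρ : Partition μ, Subord ρ χ ∧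
      (∀ i ∈ s, ∀ T : Lp ℂ 2 μ →L[ℂ] Lp ℂ 2 μ, M μ proj T ρ ≤ M μ proj T (P i)) := by
  induction s using Finset.induction_on with
  | empty => exact ⟨χ, subord_refl χ, by simp⟩
  | @insert a s ha ih =>
    obtain ⟨ρ₀, h1, h3⟩ := ih
    refine ⟨combine ρ₀ (P a), subord_trans (subord_combine_left _ _) h1, ?_⟩
    intro i hi T
    rcases Finset.mem_insert.mp hi with rfl | hi
    · exact M_combine_le_right hproj T _ _
    · exact (M_combine_le_left hproj T _ _).trans (h3 i hi T)

end Combine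


section Step

variable {μ : Measure 𝒳} {proj : Set 𝒳 → (Lp ℂ 2 μ →L[ℂ] Lp ℂ 2 μ)}

lemma step_comp_proj (hproj : IsIndicatorProj μ proj) (χ : Partition μ)
    (c : Fin χ.J → ℂ) {S : Set 𝒳} (hS : MeasurableSet S) {j : Fin χ.J}
    (hsub : S ⊆ χ.Y j) :
    (∑ j', c j' • proj (χ.Y j')).comp (proj S) = c j • proj S := by
  rw [ContinuousLinearMap.finset_sum_comp]
  have he : ∀ j', (c j' • proj (χ.Y j')).comp (proj S)
      = c j' • proj (χ.Y j' ∩ S) := by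
    intro j'
    rw [ContinuousLinearMap.smul_comp, proj_comp_proj hproj (χ.meas j') hS]
  simp_rw [he]
  rw [Finset.sum_eq_single j]
  · rw [Set.inter_eq_self_of_subset_right hsub]
  · intro j' _ hne
    have h0 : μ (χ.Y j' ∩ S) = 0 := by
      refine measure_mono_null ?_ (χ.disj j' j hne)
      intro x hx
      exact ⟨hx.1, hsub hx.2⟩
    rw [proj_of_null hproj ((χ.meas j').inter hS) h0, smul_zero]
  · intro h
    exact absurd (Finset.mem_univ j) h

variable [IsProbabilityMeasure μ]

lemma M_step (hproj : IsIndicatorProj μ proj) (χ : Partition μ)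
    (W : Lp ℂ 2 μ →L[ℂ] Lp ℂ 2 μ) (c : Fin χ.J → ℂ)
    (ρ : Partition μ) (σ : Fin ρ.J → Fin χ.J) (hσ : ∀ i, ρ.Y i ⊆ χ.Y (σ i)) :
    M μ proj (W.comp (∑ j, c j • proj (χ.Y j))) ρ
      = ∑ i, (μ (ρ.Y i)).toReal * (‖c (σ i)‖ ^ 2 * ‖W.comp (proj (ρ.Y i))‖ ^ 2) := by
  unfold M
  refine Finset.sum_congr rfl fun i _ => ?_
  rw [ContinuousLinearMap.comp_assoc, step_comp_proj hproj χ c (ρ.meas i) (hσ i),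
    ContinuousLinearMap.comp_smul,
    show ‖c (σ i) • W.comp (proj (ρ.Y i))‖ = ‖c (σ i)‖ * ‖W.comp (proj (ρ.Y i))‖
      from norm_smul (c (σ i)) (W.comp (proj (ρ.Y i))),
    mul_pow]

lemma step_additive (hproj : IsIndicatorProj μ proj) (χ : Partition μ)
    {K : ℕ} (c : Fin K → Fin χ.J → ℂ) (d : Fin χ.J → ℂ)
    (hcd : ∀ j, ∑ k, ‖c k j‖ ^ 2 = ‖d j‖ ^ 2) (W : Lp ℂ 2 μ →L[ℂ] Lp ℂ 2 μ) :
    ∑ k, munorm μ proj (W.comp (∑ j, c k j • proj (χ.Y j))) ^ 2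
      = munorm μ proj (W.comp (∑ j, d j • proj (χ.Y j))) ^ 2 := by
  have key : ∀ ρ : Partition μ, Subord ρ χ →
      ∑ k, M μ proj (W.comp (∑ j, c k j • proj (χ.Y j))) ρ
        = M μ proj (W.comp (∑ j, d j • proj (χ.Y j))) ρ := by
    intro ρ hs
    have hσ : ∀ i, ρ.Y i ⊆ χ.Y (hs i).choose := fun i => (hs i).choose_spec
    rw [M_step hproj χ W d ρ _ hσ]
    have hk : ∀ k, M μ proj (W.comp (∑ j, c k j • proj (χ.Y j))) ρ
        = ∑ i, (μ (ρ.Y i)).toReal * (‖c k ((hs i).choose)‖ ^ 2 * ‖W.comp (proj (ρ.Y i))‖ ^ 2) :=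
      fun k => M_step hproj χ W (c k) ρ _ hσ
    simp_rw [hk]
    rw [Finset.sum_comm]
    refine Finset.sum_congr rfl fun i _ => ?_
    rw [← Finset.mul_sum, ← Finset.sum_mul, hcd]
  refine le_antisymm ?_ ?_
  · refine le_munorm_sq fun ρ' => ?_
    have h1 := key (combine χ ρ') (subord_combine_left χ ρ')
    calc ∑ k, munorm μ proj (W.comp (∑ j, c k j • proj (χ.Y j))) ^ 2
        ≤ ∑ k, M μ proj (W.comp (∑ j, c k j • proj (χ.Y j))) (combine χ ρ') :=
          Finset.sum_le_sum fun k _ => munorm_sq_le _ _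
    _ = M μ proj (W.comp (∑ j, d j • proj (χ.Y j))) (combine χ ρ') := h1
    _ ≤ M μ proj (W.comp (∑ j, d j • proj (χ.Y j))) ρ' := M_combine_le_right hproj _ _ _
  · refine le_of_forall_pos_le_add fun η hη => ?_
    have hη' : (0:ℝ) < η / (K + 1) := by positivity
    have hex : ∀ k : Fin K, ∃ ρ',
        M μ proj (W.comp (∑ j, c k j • proj (χ.Y j))) ρ'
          < munorm μ proj (W.comp (∑ j, c k j • proj (χ.Y j))) ^ 2 + η / (K + 1) :=
      fun k => exists_M_lt _ hη'
    choose ρ' hρ' using hex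
    obtain ⟨ρ, hsub, hle⟩ := exists_common hproj χ Finset.univ ρ'
    calc munorm μ proj (W.comp (∑ j, d j • proj (χ.Y j))) ^ 2
        ≤ M μ proj (W.comp (∑ j, d j • proj (χ.Y j))) ρ := munorm_sq_le _ _
    _ = ∑ k, M μ proj (W.comp (∑ j, c k j • proj (χ.Y j))) ρ := (key ρ hsub).symm
    _ ≤ ∑ k, (munorm μ proj (W.comp (∑ j, c k j • proj (χ.Y j))) ^ 2 + η / (K + 1)) := by
        refine Finset.sum_le_sum fun k _ => ?_
        exact ((hle k (Finset.mem_univ k) _).trans_lt (hρ' k)).le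
    _ ≤ ∑ k, munorm μ proj (W.comp (∑ j, c k j • proj (χ.Y j))) ^ 2 + η := by
        rw [Finset.sum_add_distrib]
        have : ∑ _k : Fin K, η / (K + 1) = K * (η / (K + 1)) := by
          rw [Finset.sum_const, Finset.card_univ, Fintype.card_fin, nsmul_eq_mul]
        rw [this]
        have hK : (K : ℝ) * (η / (K + 1)) ≤ η := by
          rw [mul_div_assoc']
          rw [div_le_iff₀ (by positivity)]
          nlinarith [hη.le]
        linarith
  
end Step


section Cont

variable {μ : Measure 𝒳} {proj : Set 𝒳 → (Lp ℂ 2 μ →L[ℂ] Lp ℂ 2 μ)}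

lemma coeFn_sum_lp {ι : Type*} (s : Finset ι) (F : ι → Lp ℂ 2 μ) :
    ((∑ i ∈ s, F i : Lp ℂ 2 μ) : 𝒳 → ℂ) =ᵐ[μ] fun x => ∑ i ∈ s, F i x := by
  classical
  induction s using Finset.induction_on with
  | empty =>
    simp only [Finset.sum_empty]
    exact Lp.coeFn_zero (E := ℂ) (p := 2) (μ := μ)
  | @insert a s ha ih =>
    rw [Finset.sum_insert ha]
    filter_upwards [Lp.coeFn_add (F a) (∑ i ∈ s, F i), ih] with x e1 e2
    rw [e1]
    simp only [Pi.add_apply, e2, Finset.sum_insert ha]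

lemma opnorm_le_of_ae_bound {H : Lp ℂ 2 μ →L[ℂ] Lp ℂ 2 μ} {h : 𝒳 → ℂ} {cb : ℝ}
    (hcb : 0 ≤ cb) (hH : ∀ f : Lp ℂ 2 μ, (H f : 𝒳 → ℂ) =ᵐ[μ] fun x => h x * f x)
    (hb : ∀ᵐ x ∂μ, ‖h x‖ ≤ cb) : ‖H‖ ≤ cb := by
  refine ContinuousLinearMap.opNorm_le_bound _ hcb fun f => ?_
  rw [Lp.norm_def, Lp.norm_def, eLpNorm_congr_ae (hH f)]
  have h1 : eLpNorm (fun x => h x * f x) 2 μ ≤ eLpNorm (fun x => cb • f x) 2 μ := by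
    refine eLpNorm_mono_ae ?_
    filter_upwards [hb] with x hx
    rw [norm_mul, norm_smul]
    refine mul_le_mul_of_nonneg_right ?_ (norm_nonneg _)
    simpa [Real.norm_eq_abs, abs_of_nonneg hcb] using hx
  have h2 : eLpNorm (fun x => cb • f x) 2 μ = ‖cb‖₊ • eLpNorm (f : 𝒳 → ℂ) 2 μ :=
    eLpNorm_const_smul cb (fun x => f x) 2 μ
  rw [h2, ENNReal.smul_def, smul_eq_mul] at h1
  calc (eLpNorm (fun x => h x * f x) 2 μ).toReal
      ≤ ((‖cb‖₊ : ENNReal) * eLpNorm (f : 𝒳 → ℂ) 2 μ).toReal := by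
        refine ENNReal.toReal_mono ?_ h1
        exact ENNReal.mul_ne_top ENNReal.coe_ne_top (Lp.eLpNorm_ne_top f)
  _ = cb * (eLpNorm (f : 𝒳 → ℂ) 2 μ).toReal := by
        rw [ENNReal.toReal_mul, ENNReal.coe_toReal, coe_nnnorm, Real.norm_eq_abs,
          abs_of_nonneg hcb]

variable [IsProbabilityMeasure μ]

lemma munorm_le_opnorm (hproj : IsIndicatorProj μ proj)
    (W : Lp ℂ 2 μ →L[ℂ] Lp ℂ 2 μ) : munorm μ proj W ≤ ‖W‖ := by
  refine (munorm_le_sqrt W (ptriv μ)).trans ?_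
  have : M μ proj W (ptriv μ) = ‖W.comp (proj Set.univ)‖ ^ 2 := by
    show ∑ _j : Fin 1, (μ (Set.univ : Set 𝒳)).toReal * ‖W.comp (proj Set.univ)‖ ^ 2 = _
    rw [Fin.sum_univ_one, measure_univ, ENNReal.toReal_one, one_mul]
  rw [this, Real.sqrt_sq (norm_nonneg _)]
  exact norm_comp_proj_le hproj MeasurableSet.univ W

lemma munorm_sq_le_close (hproj : IsIndicatorProj μ proj)
    (A B : Lp ℂ 2 μ →L[ℂ] Lp ℂ 2 μ) :
    munorm μ proj A ^ 2 ≤ munorm μ proj B ^ 2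
      + (2 * ‖A - B‖ * ‖B‖ + ‖A - B‖ ^ 2) := by
  have key : ∀ χ : Partition μ, M μ proj A χ
      ≤ M μ proj B χ + (2 * ‖A - B‖ * ‖B‖ + ‖A - B‖ ^ 2) := by
    intro χ
    have hterm : ∀ j, (μ (χ.Y j)).toReal * ‖A.comp (proj (χ.Y j))‖ ^ 2
        ≤ (μ (χ.Y j)).toReal * ‖B.comp (proj (χ.Y j))‖ ^ 2
          + (2 * ‖A - B‖ * ((μ (χ.Y j)).toReal * ‖B.comp (proj (χ.Y j))‖)
            + (μ (χ.Y j)).toReal * ‖A - B‖ ^ 2) := by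
      intro j
      have h1 : ‖A.comp (proj (χ.Y j))‖ ≤ ‖B.comp (proj (χ.Y j))‖ + ‖A - B‖ := by
        have : A.comp (proj (χ.Y j)) = B.comp (proj (χ.Y j)) + (A - B).comp (proj (χ.Y j)) := by
          rw [← ContinuousLinearMap.add_comp, add_sub_cancel]
        rw [this]
        refine (norm_add_le _ _).trans ?_
        have := norm_comp_proj_le hproj (χ.meas j) (A - B)
        linarith
      have h2 : ‖A.comp (proj (χ.Y j))‖ ^ 2
          ≤ (‖B.comp (proj (χ.Y j))‖ + ‖A - B‖) ^ 2 :=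
        pow_le_pow_left₀ (norm_nonneg _) h1 2
      have h3 : (0:ℝ) ≤ (μ (χ.Y j)).toReal := ENNReal.toReal_nonneg
      nlinarith [norm_nonneg (A - B), norm_nonneg (B.comp (proj (χ.Y j)))]
    calc M μ proj A χ ≤ ∑ j, ((μ (χ.Y j)).toReal * ‖B.comp (proj (χ.Y j))‖ ^ 2
          + (2 * ‖A - B‖ * ((μ (χ.Y j)).toReal * ‖B.comp (proj (χ.Y j))‖)
            + (μ (χ.Y j)).toReal * ‖A - B‖ ^ 2)) := Finset.sum_le_sum fun j _ => hterm j
    _ = M μ proj B χ + (2 * ‖A - B‖ * (∑ j, (μ (χ.Y j)).toReal * ‖B.comp (proj (χ.Y j))‖)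
          + (∑ j, (μ (χ.Y j)).toReal) * ‖A - B‖ ^ 2) := by
        rw [Finset.sum_add_distrib, Finset.sum_add_distrib, ← Finset.mul_sum, ← Finset.sum_mul]
        rfl
    _ ≤ M μ proj B χ + (2 * ‖A - B‖ * ‖B‖ + 1 * ‖A - B‖ ^ 2) := by
        have hs1 : ∑ j, (μ (χ.Y j)).toReal * ‖B.comp (proj (χ.Y j))‖ ≤ ‖B‖ := by
          calc ∑ j, (μ (χ.Y j)).toReal * ‖B.comp (proj (χ.Y j))‖
              ≤ ∑ j, (μ (χ.Y j)).toReal * ‖B‖ := by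
                refine Finset.sum_le_sum fun j _ => ?_
                exact mul_le_mul_of_nonneg_left (norm_comp_proj_le hproj (χ.meas j) B)
                  ENNReal.toReal_nonneg
          _ = ‖B‖ := by rw [← Finset.sum_mul, sum_measure_toReal χ, one_mul]
        have hs2 : ∑ j, (μ (χ.Y j)).toReal = 1 := sum_measure_toReal χ
        rw [hs2]
        have := mul_le_mul_of_nonneg_left hs1
          (by positivity : (0:ℝ) ≤ 2 * ‖A - B‖)
        linarith
    _ = M μ proj B χ + (2 * ‖A - B‖ * ‖B‖ + ‖A - B‖ ^ 2) := by ring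
  have h4 : munorm μ proj A ^ 2 - (2 * ‖A - B‖ * ‖B‖ + ‖A - B‖ ^ 2)
      ≤ munorm μ proj B ^ 2 := by
    refine le_munorm_sq fun χ => ?_
    have := munorm_sq_le (proj := proj) A χ
    linarith [key χ]
  linarith

end Cont


section Approx

variable {μ : Measure 𝒳} {proj : Set 𝒳 → (Lp ℂ 2 μ →L[ℂ] Lp ℂ 2 μ)}

lemma ae_bound_of_memTop {f : 𝒳 → ℂ} (hf : MemLp f ⊤ μ) :
    ∀ᵐ x ∂μ, ‖f x‖ ≤ (eLpNorm f ⊤ μ).toReal := by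
  have hne : eLpNormEssSup f μ ≠ ⊤ := by
    rw [← eLpNorm_exponent_top]
    exact hf.2.ne
  filter_upwards [enorm_ae_le_eLpNormEssSup f μ] with x hx
  have h2 : ((‖f x‖₊ : ENNReal)).toReal ≤ (eLpNormEssSup f μ).toReal :=
    ENNReal.toReal_mono hne hx
  simpa [eLpNorm_exponent_top] using h2

lemma exists_step_approx [IsProbabilityMeasure μ] (hproj : IsIndicatorProj μ proj)
    {K : ℕ} {gk : Fin K → 𝒳 → ℂ} {g : 𝒳 → ℂ}
    (hgk : ∀ k, MemLp (gk k) ⊤ μ) (hg : MemLp g ⊤ μ)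
    (hsum : ∀ᵐ x ∂μ, ∑ k, ‖gk k x‖ ^ 2 = ‖g x‖ ^ 2)
    (Gk : Fin K → (Lp ℂ 2 μ →L[ℂ] Lp ℂ 2 μ))
    (hGk : ∀ k, ∀ f : Lp ℂ 2 μ, (Gk k f : 𝒳 → ℂ) =ᵐ[μ] fun x => gk k x * f x)
    (G : Lp ℂ 2 μ →L[ℂ] Lp ℂ 2 μ)
    (hG : ∀ f : Lp ℂ 2 μ, (G f : 𝒳 → ℂ) =ᵐ[μ] fun x => g x * f x)
    {ε : ℝ} (hε : 0 < ε) :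
    ∃ (χ : Partition μ) (c : Fin K → Fin χ.J → ℂ) (d : Fin χ.J → ℂ),
      (∀ j, ∑ k, ‖c k j‖ ^ 2 = ‖d j‖ ^ 2) ∧
      (∀ k, ‖Gk k - ∑ j, c k j • proj (χ.Y j)‖ ≤ 2 * ε) ∧
      ‖G - ∑ j, d j • proj (χ.Y j)‖ ≤ 2 * ε := by
  classical
  -- measurable representatives
  set g' : Fin K → 𝒳 → ℂ := fun k => ((hgk k).1.mk (gk k)) with hg'def
  have hg'm : ∀ k, Measurable (g' k) := fun k => (hgk k).1.stronglyMeasurable_mk.measurable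
  have hg'e : ∀ k, gk k =ᵐ[μ] g' k := fun k => (hgk k).1.ae_eq_mk
  set g₀ : 𝒳 → ℂ := hg.1.mk g with hg₀def
  have hg₀m : Measurable g₀ := hg.1.stronglyMeasurable_mk.measurable
  have hg₀e : g =ᵐ[μ] g₀ := hg.1.ae_eq_mk
  -- uniform bound
  set C : ℝ := (eLpNorm g ⊤ μ).toReal + ∑ k, (eLpNorm (gk k) ⊤ μ).toReal with hC
  have hC0 : (0:ℝ) ≤ C := by positivity
  have hCk : ∀ k, (eLpNorm (gk k) ⊤ μ).toReal ≤ C := by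
    intro k
    have h1 : (eLpNorm (gk k) ⊤ μ).toReal ≤ ∑ k', (eLpNorm (gk k') ⊤ μ).toReal :=
      Finset.single_le_sum (f := fun k' => (eLpNorm (gk k') ⊤ μ).toReal)
        (fun k' _ => ENNReal.toReal_nonneg) (Finset.mem_univ k)
    have h2 : (0:ℝ) ≤ (eLpNorm g ⊤ μ).toReal := ENNReal.toReal_nonneg
    rw [hC]; linarith
  have hCg : (eLpNorm g ⊤ μ).toReal ≤ C := by
    have h1 : (0:ℝ) ≤ ∑ k', (eLpNorm (gk k') ⊤ μ).toReal := by positivity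
    rw [hC]; linarith
  -- the good set
  set Pset : Set 𝒳 := {x | (∀ k, gk k x = g' k x ∧ ‖gk k x‖ ≤ C) ∧
      (g x = g₀ x ∧ ‖g x‖ ≤ C) ∧ ∑ k, ‖gk k x‖ ^ 2 = ‖g x‖ ^ 2} with hPset
  have hPae : ∀ᵐ x ∂μ, x ∈ Pset := by
    have h1 : ∀ᵐ x ∂μ, ∀ k, gk k x = g' k x ∧ ‖gk k x‖ ≤ C := by
      rw [MeasureTheory.ae_all_iff]
      intro k
      filter_upwards [hg'e k, ae_bound_of_memTop (hgk k)] with x e1 e2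
      exact ⟨e1, e2.trans (hCk k)⟩
    filter_upwards [h1, hg₀e, ae_bound_of_memTop hg, hsum] with x e1 e2 e3 e4
    exact ⟨e1, ⟨e2, e3.trans hCg⟩, e4⟩
  set Gd : Set 𝒳 := (toMeasurable μ Psetᶜ)ᶜ with hGd
  have hGdm : MeasurableSet Gd := (measurableSet_toMeasurable μ _).compl
  have hGdP : ∀ x ∈ Gd, x ∈ Pset := by
    intro x hx
    by_contra hc
    exact hx (subset_toMeasurable μ _ hc)
  have hGdc : μ Gdᶜ = 0 := by
    rw [hGd, compl_compl, measure_toMeasurable]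
    exact MeasureTheory.ae_iff.mp hPae
  have hGae : ∀ᵐ x ∂μ, x ∈ Gd := by
    rw [MeasureTheory.ae_iff]
    exact hGdc
  -- grid map
  set q : ℂ → ℤ × ℤ := fun z => (⌊z.re / ε⌋, ⌊z.im / ε⌋) with hq
  have hqm : Measurable q :=
    ((Complex.measurable_re.div_const ε).floor).prodMk
      ((Complex.measurable_im.div_const ε).floor)
  have hqkey : ∀ a b : ℝ, ⌊a / ε⌋ = ⌊b / ε⌋ → |a - b| ≤ ε := by
    intro a b hab
    have f1 := Int.floor_le (a / ε)
    have f2 := Int.lt_floor_add_one (a / ε)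
    have f3 := Int.floor_le (b / ε)
    have f4 := Int.lt_floor_add_one (b / ε)
    rw [hab] at f1 f2
    have hd1 : a / ε - b / ε ≤ 1 := by linarith
    have hd2 : b / ε - a / ε ≤ 1 := by linarith
    have he1 : a - b = (a / ε - b / ε) * ε := by field_simp
    have he2 : b - a = (b / ε - a / ε) * ε := by field_simp
    rw [abs_sub_le_iff, he1, he2]
    constructor
    · calc (a / ε - b / ε) * ε ≤ 1 * ε := mul_le_mul_of_nonneg_right hd1 hε.le
      _ = ε := one_mul ε
    · calc (b / ε - a / ε) * ε ≤ 1 * ε := mul_le_mul_of_nonneg_right hd2 hε.le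
      _ = ε := one_mul ε
  have hqdist : ∀ z w : ℂ, q z = q w → ‖z - w‖ ≤ 2 * ε := by
    intro z w hzw
    have h1 : ⌊z.re / ε⌋ = ⌊w.re / ε⌋ := congrArg Prod.fst hzw
    have h2 : ⌊z.im / ε⌋ = ⌊w.im / ε⌋ := congrArg Prod.snd hzw
    have hre : |(z - w).re| ≤ ε := by
      simpa [Complex.sub_re] using hqkey z.re w.re h1
    have him : |(z - w).im| ≤ ε := by
      simpa [Complex.sub_im] using hqkey z.im w.im h2
    calc ‖z - w‖ ≤ |(z - w).re| + |(z - w).im| := by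
          exact Complex.norm_le_abs_re_add_abs_im (z - w)
    _ ≤ 2 * ε := by linarith
  -- bounded box
  set Mz : ℤ := ⌈C / ε⌉ with hMz
  set Box : Finset (ℤ × ℤ) := Finset.Icc (-Mz, -Mz) (Mz, Mz) with hBox
  have hfloorbound : ∀ a : ℝ, |a| ≤ C → -Mz ≤ ⌊a / ε⌋ ∧ ⌊a / ε⌋ ≤ Mz := by
    intro a ha
    rw [abs_le] at ha
    have hu : a / ε ≤ C / ε := by gcongr; exact ha.2
    constructor
    · have hl : -(C / ε) ≤ a / ε := by
        rw [← neg_div]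
        gcongr
        exact ha.1

      calc -Mz = ⌊-(C / ε)⌋ := by rw [Int.floor_neg, hMz]
      _ ≤ ⌊a / ε⌋ := Int.floor_le_floor hl
    · calc ⌊a / ε⌋ ≤ ⌈a / ε⌉ := Int.floor_le_ceil _
      _ ≤ Mz := Int.ceil_le_ceil hu
  have hqbox : ∀ z : ℂ, ‖z‖ ≤ C → q z ∈ Box := by
    intro z hz
    have hre := hfloorbound z.re ((Complex.abs_re_le_norm z).trans hz)
    have him := hfloorbound z.im ((Complex.abs_im_le_norm z).trans hz)
    rw [hBox, Finset.mem_Icc]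
    constructor
    · exact ⟨hre.1, him.1⟩
    · exact ⟨hre.2, him.2⟩
  -- the map into the finite index set
  set ψ : 𝒳 → (Fin K → ℤ × ℤ) × (ℤ × ℤ) := fun x => (fun k => q (g' k x), q (g₀ x)) with hψ
  have hψm : Measurable ψ :=
    (measurable_pi_lambda _ fun k => hqm.comp (hg'm k)).prodMk (hqm.comp hg₀m)
  set V : Finset ((Fin K → ℤ × ℤ) × (ℤ × ℤ)) := (Fintype.piFinset fun _ => Box) ×ˢ Box with hV
  have hψV : ∀ x ∈ Gd, ψ x ∈ V := by
    intro x hx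
    obtain ⟨h1, h2, _⟩ := hGdP x hx
    rw [hV, Finset.mem_product]
    constructor
    · rw [Fintype.mem_piFinset]
      intro k
      have hb : ‖g' k x‖ ≤ C := by rw [← (h1 k).1]; exact (h1 k).2
      exact hqbox _ hb
    · have hb : ‖g₀ x‖ ≤ C := by rw [← h2.1]; exact h2.2
      exact hqbox _ hb
  set Z : ((Fin K → ℤ × ℤ) × (ℤ × ℤ)) → Set 𝒳 := fun v => Gd ∩ ψ ⁻¹' {v} with hZ
  have hZm : ∀ v, MeasurableSet (Z v) := fun v => hGdm.inter (hψm (measurableSet_singleton v))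
  have hZdisj : ∀ v w, v ≠ w → Z v ∩ Z w = ∅ := by
    intro v w hvw
    ext x
    simp only [hZ, Set.mem_inter_iff, Set.mem_preimage, Set.mem_singleton_iff,
      Set.mem_empty_iff_false, iff_false]
    rintro ⟨⟨-, h1⟩, -, h2⟩
    exact hvw (h1.symm.trans h2)
  set e := V.equivFin with he
  set Ypc : Fin V.card → Set 𝒳 := fun i => Z ((e.symm i) : ((Fin K → ℤ × ℤ) × (ℤ × ℤ))) with hYpc
  have hYmemZ : ∀ x (hx : x ∈ Gd), x ∈ Ypc (e ⟨ψ x, hψV x hx⟩) := by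
    intro x hx
    rw [hYpc]
    simp only [Equiv.symm_apply_apply]
    exact ⟨hx, rfl⟩
  have hcover : μ (Set.univ \ ⋃ i, Ypc i) = 0 := by
    refine measure_mono_null ?_ hGdc
    rintro x ⟨-, hx2⟩
    by_contra hxg
    rw [Set.mem_compl_iff, not_not] at hxg
    exact hx2 (Set.mem_iUnion.2 ⟨e ⟨ψ x, hψV x hxg⟩, hYmemZ x hxg⟩)
  have hdisj : ∀ i k, i ≠ k → μ (Ypc i ∩ Ypc k) = 0 := by
    intro i k hik
    have hvw : ((e.symm i : _) : ((Fin K → ℤ × ℤ) × (ℤ × ℤ)))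
        ≠ ((e.symm k : _) : ((Fin K → ℤ × ℤ) × (ℤ × ℤ))) := by
      intro hc
      exact hik (e.symm.injective (Subtype.coe_injective hc))
    rw [hYpc]
    simp only []
    rw [hZdisj _ _ hvw, measure_empty]
  set χ : Partition μ := ⟨V.card, Ypc, fun i => hZm _, hcover, hdisj⟩ with hχ
  set c : Fin K → Fin χ.J → ℂ :=
    fun k i => if h : (Ypc i).Nonempty then gk k h.choose else 0 with hc
  set d : Fin χ.J → ℂ :=
    fun i => if h : (Ypc i).Nonempty then g h.choose else 0 with hd
  have hYpcGd : ∀ (i : Fin χ.J) x, x ∈ Ypc i → x ∈ Gd := fun i x hx => hx.1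
  have hYpcψ : ∀ (i : Fin χ.J) x, x ∈ Ypc i →
      ψ x = ((e.symm i : _) : ((Fin K → ℤ × ℤ) × (ℤ × ℤ))) := fun i x hx => hx.2
  -- the sum identity for constants
  have hcdsum : ∀ i, ∑ k, ‖c k i‖ ^ 2 = ‖d i‖ ^ 2 := by
    intro i
    by_cases h : (Ypc i).Nonempty
    · simp only [hc, hd, dif_pos h]
      exact (hGdP _ (hYpcGd i _ h.choose_spec)).2.2
    · simp only [hc, hd, dif_neg h]
      simp
  -- closeness of constants on pieces
  have hclose : ∀ (i : Fin χ.J) x, x ∈ Ypc i →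
      (∀ k, ‖gk k x - c k i‖ ≤ 2 * ε) ∧ ‖g x - d i‖ ≤ 2 * ε := by
    intro i x hx
    have h : (Ypc i).Nonempty := ⟨x, hx⟩
    have hx0 := h.choose_spec
    have hPx := hGdP _ (hYpcGd i _ hx)
    have hPx0 := hGdP _ (hYpcGd i _ hx0)
    have hψeq : ψ x = ψ h.choose := by rw [hYpcψ i x hx, hYpcψ i _ hx0]
    constructor
    · intro k
      simp only [hc, dif_pos h]
      have h1 : q (g' k x) = q (g' k h.choose) := congrFun (congrArg Prod.fst hψeq) k
      have h2 := hqdist _ _ h1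
      rw [(hPx.1 k).1, (hPx0.1 k).1]
      exact h2
    · simp only [hd, dif_pos h]
      have h1 : q (g₀ x) = q (g₀ h.choose) := congrArg Prod.snd hψeq
      have h2 := hqdist _ _ h1
      rw [hPx.2.1.1, hPx0.2.1.1]
      exact h2
  -- step functions
  have hsval : ∀ (cf : Fin χ.J → ℂ) (i : Fin χ.J) x, x ∈ Ypc i →
      ∑ i', (Ypc i').indicator (fun _ => cf i') x = cf i := by
    intro cf i x hx
    rw [Finset.sum_eq_single i]
    · exact Set.indicator_of_mem hx _
    · intro i' _ hne
      refine Set.indicator_of_notMem ?_ _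
      intro hx'
      have hvw : ((e.symm i' : _) : ((Fin K → ℤ × ℤ) × (ℤ × ℤ)))
          ≠ ((e.symm i : _) : ((Fin K → ℤ × ℤ) × (ℤ × ℤ))) := by
        intro hceq
        exact hne (e.symm.injective (Subtype.coe_injective hceq))
      have hempty := hZdisj _ _ hvw
      have : x ∈ Z ((e.symm i' : _) : _) ∩ Z ((e.symm i : _) : _) := ⟨hx', hx⟩
      rw [hempty] at this
      exact this
    · intro hmem
      exact absurd (Finset.mem_univ i) hmem
  -- coefficient operators act as multiplication by the step function
  have hS_coe : ∀ (cf : Fin χ.J → ℂ) (f : Lp ℂ 2 μ),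
      (((∑ i, cf i • proj (χ.Y i)) f : Lp ℂ 2 μ) : 𝒳 → ℂ)
        =ᵐ[μ] fun x => (∑ i, (Ypc i).indicator (fun _ => cf i) x) * f x := by
    intro cf f
    have h1 : (∑ i, cf i • proj (χ.Y i)) f = ∑ i, cf i • (proj (χ.Y i) f) := by
      simp [ContinuousLinearMap.sum_apply, ContinuousLinearMap.smul_apply]
    rw [h1]
    have h2 : ((∑ i, cf i • (proj (χ.Y i) f) : Lp ℂ 2 μ) : 𝒳 → ℂ)
        =ᵐ[μ] fun x => ∑ i, (cf i • (proj (χ.Y i) f) : Lp ℂ 2 μ) x :=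
      coeFn_sum_lp Finset.univ _
    have h3 : ∀ᵐ x ∂μ, ∀ i : Fin χ.J,
        (cf i • (proj (χ.Y i) f) : Lp ℂ 2 μ) x = cf i * ((χ.Y i).indicator f x) := by
      rw [MeasureTheory.ae_all_iff]
      intro i
      filter_upwards [Lp.coeFn_smul (cf i) (proj (χ.Y i) f),
        hproj (χ.Y i) (χ.meas i) f] with x e1 e2
      rw [e1]
      simp only [Pi.smul_apply, smul_eq_mul, e2]
    filter_upwards [h2, h3] with x e1 e2
    rw [e1, Finset.sum_congr rfl (fun i _ => e2 i), Finset.sum_mul]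
    refine Finset.sum_congr rfl fun i _ => ?_
    by_cases hx : x ∈ Ypc i
    · rw [Set.indicator_of_mem hx, Set.indicator_of_mem hx]
    · rw [Set.indicator_of_notMem hx, Set.indicator_of_notMem hx, zero_mul, mul_zero]
  -- operator norm bounds
  have hdiffk : ∀ k, ‖Gk k - ∑ i, c k i • proj (χ.Y i)‖ ≤ 2 * ε := by
    intro k
    refine opnorm_le_of_ae_bound (h := fun x => gk k x
        - ∑ i, (Ypc i).indicator (fun _ => c k i) x) (by positivity) ?_ ?_
    · intro f
      have hsa : (Gk k - ∑ i, c k i • proj (χ.Y i)) f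
          = Gk k f - (∑ i, c k i • proj (χ.Y i)) f := rfl
      rw [hsa]
      filter_upwards [Lp.coeFn_sub (Gk k f) ((∑ i, c k i • proj (χ.Y i)) f),
        hGk k f, hS_coe (c k) f] with x e1 e2 e3
      rw [e1]
      simp only [Pi.sub_apply]
      rw [e2, e3, sub_mul]
    · filter_upwards [hGae] with x hx
      obtain ⟨i, hxi⟩ : ∃ i : Fin χ.J, x ∈ Ypc i := ⟨_, hYmemZ x hx⟩
      rw [hsval (c k) i x hxi]
      exact (hclose i x hxi).1 k
  have hdiffg : ‖G - ∑ i, d i • proj (χ.Y i)‖ ≤ 2 * ε := by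
    refine opnorm_le_of_ae_bound (h := fun x => g x
        - ∑ i, (Ypc i).indicator (fun _ => d i) x) (by positivity) ?_ ?_
    · intro f
      have hsa : (G - ∑ i, d i • proj (χ.Y i)) f
          = G f - (∑ i, d i • proj (χ.Y i)) f := rfl
      rw [hsa]
      filter_upwards [Lp.coeFn_sub (G f) ((∑ i, d i • proj (χ.Y i)) f),
        hG f, hS_coe d f] with x e1 e2 e3
      rw [e1]
      simp only [Pi.sub_apply]
      rw [e2, e3, sub_mul]
    · filter_upwards [hGae] with x hx
      obtain ⟨i, hxi⟩ : ∃ i : Fin χ.J, x ∈ Ypc i := ⟨_, hYmemZ x hx⟩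
      rw [hsval d i x hxi]
      exact (hclose i x hxi).2
  exact ⟨χ, c, d, hcdsum, hdiffk, hdiffg⟩

end Approx

set_option maxHeartbeats 2000000 in
theorem munorm_sq_mul_additive (μ : Measure 𝒳) [IsProbabilityMeasure μ]
    (proj : Set 𝒳 → (Lp ℂ 2 μ →L[ℂ] Lp ℂ 2 μ))
    (hproj : IsIndicatorProj μ proj)
    (K : ℕ) (gk : Fin K → 𝒳 → ℂ) (g : 𝒳 → ℂ)
    (hgk : ∀ k, MemLp (gk k) ⊤ μ) (hg : MemLp g ⊤ μ)
    (hsum : ∀ᵐ x ∂μ, ∑ k, ‖gk k x‖ ^ 2 = ‖g x‖ ^ 2)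
    (Gk : Fin K → (Lp ℂ 2 μ →L[ℂ] Lp ℂ 2 μ))
    (hGk : ∀ k, ∀ f : Lp ℂ 2 μ, (Gk k f : 𝒳 → ℂ) =ᵐ[μ] fun x => gk k x * f x)
    (G : Lp ℂ 2 μ →L[ℂ] Lp ℂ 2 μ)
    (hG : ∀ f : Lp ℂ 2 μ, (G f : 𝒳 → ℂ) =ᵐ[μ] fun x => g x * f x)
    (W : Lp ℂ 2 μ →L[ℂ] Lp ℂ 2 μ) :
    ∑ k, munorm μ proj (W.comp (Gk k)) ^ 2 = munorm μ proj (W.comp G) ^ 2 := by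
  classical
  have hGknorm : ∀ k, ‖Gk k‖ ≤ (eLpNorm (gk k) ⊤ μ).toReal :=
    fun k => opnorm_le_of_ae_bound ENNReal.toReal_nonneg (hGk k) (ae_bound_of_memTop (hgk k))
  have hGnorm : ‖G‖ ≤ (eLpNorm g ⊤ μ).toReal :=
    opnorm_le_of_ae_bound ENNReal.toReal_nonneg hG (ae_bound_of_memTop hg)
  set C0 : ℝ := (eLpNorm g ⊤ μ).toReal + ∑ k, (eLpNorm (gk k) ⊤ μ).toReal with hC0def
  have hC00 : (0:ℝ) ≤ C0 :=
    add_nonneg ENNReal.toReal_nonneg (Finset.sum_nonneg fun _ _ => ENNReal.toReal_nonneg)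
  have hGkC0 : ∀ k, ‖Gk k‖ ≤ C0 := by
    intro k
    have h1 : (eLpNorm (gk k) ⊤ μ).toReal ≤ ∑ k', (eLpNorm (gk k') ⊤ μ).toReal :=
      Finset.single_le_sum (f := fun k' => (eLpNorm (gk k') ⊤ μ).toReal)
        (fun k' _ => ENNReal.toReal_nonneg) (Finset.mem_univ k)
    have h2 : (0:ℝ) ≤ (eLpNorm g ⊤ μ).toReal := ENNReal.toReal_nonneg
    have := hGknorm k
    rw [hC0def]
    linarith
  have hGC0 : ‖G‖ ≤ C0 := by
    have h1 : (0:ℝ) ≤ ∑ k', (eLpNorm (gk k') ⊤ μ).toReal :=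
      Finset.sum_nonneg fun _ _ => ENNReal.toReal_nonneg
    rw [hC0def]
    linarith
  have hWcomp : ∀ X Y : Lp ℂ 2 μ →L[ℂ] Lp ℂ 2 μ,
      ‖W.comp X - W.comp Y‖ ≤ ‖W‖ * ‖X - Y‖ := by
    intro X Y
    have heq : W.comp X - W.comp Y = W.comp (X - Y) := by
      ext f
      simp [ContinuousLinearMap.comp_apply, map_sub]
    rw [heq]
    exact ContinuousLinearMap.opNorm_comp_le W (X - Y)
  have key : ∀ η : ℝ, 0 < η →
      |∑ k, munorm μ proj (W.comp (Gk k)) ^ 2 - munorm μ proj (W.comp G) ^ 2| ≤ η := by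
    intro η hη
    have hW0 : (0:ℝ) ≤ ‖W‖ := norm_nonneg W
    set B0 : ℝ := ‖W‖ * (C0 + 2) with hB0def
    have hB00 : (0:ℝ) ≤ B0 := by
      rw [hB0def]
      exact mul_nonneg hW0 (by linarith)
    set D1 : ℝ := 4 * ‖W‖ * B0 + 4 * ‖W‖ ^ 2 with hD1def
    have hD10 : (0:ℝ) ≤ D1 := by
      rw [hD1def]
      have h1 : (0:ℝ) ≤ 4 * ‖W‖ * B0 := mul_nonneg (mul_nonneg (by norm_num) hW0) hB00
      have h2 : (0:ℝ) ≤ 4 * ‖W‖ ^ 2 := mul_nonneg (by norm_num) (sq_nonneg _)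
      linarith
    have hKD : (0:ℝ) ≤ (K + 1) * D1 := mul_nonneg (by positivity) hD10
    set ε : ℝ := min 1 (η / ((K + 1) * D1 + 1)) with hεdef
    have hε : 0 < ε := lt_min one_pos (div_pos hη (by linarith))
    have hε1 : ε ≤ 1 := min_le_left _ _
    obtain ⟨χ, c, d, hcd, hdk, hdg⟩ := exists_step_approx hproj hgk hg hsum Gk hGk G hG hε
    set Sk : Fin K → (Lp ℂ 2 μ →L[ℂ] Lp ℂ 2 μ) := fun k => ∑ j, c k j • proj (χ.Y j)
      with hSkdef
    set S : Lp ℂ 2 μ →L[ℂ] Lp ℂ 2 μ := ∑ j, d j • proj (χ.Y j) with hSdef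
    have hSknorm : ∀ k, ‖Sk k‖ ≤ C0 + 2 := by
      intro k
      have h1 : ‖Sk k‖ ≤ ‖Gk k‖ + ‖Gk k - Sk k‖ := by
        have h2 : Sk k = Gk k - (Gk k - Sk k) := by abel
        calc ‖Sk k‖ = ‖Gk k - (Gk k - Sk k)‖ := by rw [← h2]
        _ ≤ ‖Gk k‖ + ‖Gk k - Sk k‖ := norm_sub_le _ _
      have h3 := hdk k
      have h4 := hGkC0 k
      linarith
    have hSnorm : ‖S‖ ≤ C0 + 2 := by
      have h1 : ‖S‖ ≤ ‖G‖ + ‖G - S‖ := by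
        have h2 : S = G - (G - S) := by abel
        calc ‖S‖ = ‖G - (G - S)‖ := by rw [← h2]
        _ ≤ ‖G‖ + ‖G - S‖ := norm_sub_le _ _
      linarith
    have hstep := step_additive hproj χ c d hcd W
    have h2εW : (0:ℝ) ≤ 2 * ε * ‖W‖ :=
      mul_nonneg (mul_nonneg (by norm_num) hε.le) hW0
    have hper : ∀ A B : Lp ℂ 2 μ →L[ℂ] Lp ℂ 2 μ, ‖A - B‖ ≤ 2 * ε * ‖W‖ → ‖B‖ ≤ B0 →
        ‖A‖ ≤ B0 → |munorm μ proj A ^ 2 - munorm μ proj B ^ 2| ≤ ε * D1 := by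
      intro A B hAB hB hA
      have h1 := munorm_sq_le_close hproj A B
      have h2 := munorm_sq_le_close hproj B A
      rw [norm_sub_rev] at h2
      have hAB0 : (0:ℝ) ≤ ‖A - B‖ := norm_nonneg _
      have hW0 : (0:ℝ) ≤ ‖W‖ := norm_nonneg _
      have hBn : (0:ℝ) ≤ ‖B‖ := norm_nonneg _
      have hAn : (0:ℝ) ≤ ‖A‖ := norm_nonneg _
      have hbound : 2 * ‖A - B‖ * ‖B‖ + ‖A - B‖ ^ 2 ≤ ε * D1 ∧
          2 * ‖A - B‖ * ‖A‖ + ‖A - B‖ ^ 2 ≤ ε * D1 := by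
        constructor
        · rw [hD1def]
          nlinarith [mul_le_mul hAB hB hBn h2εW,
            mul_le_mul hAB hAB hAB0 h2εW,
            mul_le_mul_of_nonneg_right hε1 (mul_nonneg (mul_nonneg hε.le hW0) hW0)]
        · rw [hD1def]
          nlinarith [mul_le_mul hAB hA hAn h2εW,
            mul_le_mul hAB hAB hAB0 h2εW,
            mul_le_mul_of_nonneg_right hε1 (mul_nonneg (mul_nonneg hε.le hW0) hW0)]
      rw [abs_sub_le_iff]
      constructor
      · linarith [hbound.1]
      · linarith [hbound.2]
    have hperk : ∀ k, |munorm μ proj (W.comp (Gk k)) ^ 2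
        - munorm μ proj (W.comp (Sk k)) ^ 2| ≤ ε * D1 := by
      intro k
      refine hper _ _ ?_ ?_ ?_
      · calc ‖W.comp (Gk k) - W.comp (Sk k)‖ ≤ ‖W‖ * ‖Gk k - Sk k‖ := hWcomp _ _
        _ ≤ ‖W‖ * (2 * ε) := mul_le_mul_of_nonneg_left (hdk k) (norm_nonneg W)
        _ = 2 * ε * ‖W‖ := by ring
      · calc ‖W.comp (Sk k)‖ ≤ ‖W‖ * ‖Sk k‖ := ContinuousLinearMap.opNorm_comp_le _ _
        _ ≤ B0 := by
            rw [hB0def]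
            exact mul_le_mul_of_nonneg_left (hSknorm k) (norm_nonneg W)
      · calc ‖W.comp (Gk k)‖ ≤ ‖W‖ * ‖Gk k‖ := ContinuousLinearMap.opNorm_comp_le _ _
        _ ≤ B0 := by
            rw [hB0def]
            refine mul_le_mul_of_nonneg_left ?_ (norm_nonneg W)
            linarith [hGkC0 k]
    have hperg : |munorm μ proj (W.comp G) ^ 2 - munorm μ proj (W.comp S) ^ 2| ≤ ε * D1 := by
      refine hper _ _ ?_ ?_ ?_
      · calc ‖W.comp G - W.comp S‖ ≤ ‖W‖ * ‖G - S‖ := hWcomp _ _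
        _ ≤ ‖W‖ * (2 * ε) := mul_le_mul_of_nonneg_left hdg (norm_nonneg W)
        _ = 2 * ε * ‖W‖ := by ring
      · calc ‖W.comp S‖ ≤ ‖W‖ * ‖S‖ := ContinuousLinearMap.opNorm_comp_le _ _
        _ ≤ B0 := by
            rw [hB0def]
            exact mul_le_mul_of_nonneg_left hSnorm (norm_nonneg W)
      · calc ‖W.comp G‖ ≤ ‖W‖ * ‖G‖ := ContinuousLinearMap.opNorm_comp_le _ _
        _ ≤ B0 := by
            rw [hB0def]
            refine mul_le_mul_of_nonneg_left ?_ (norm_nonneg W)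
            linarith
    have hsum1 : |∑ k, munorm μ proj (W.comp (Gk k)) ^ 2
        - ∑ k, munorm μ proj (W.comp (Sk k)) ^ 2| ≤ K * (ε * D1) := by
      rw [← Finset.sum_sub_distrib]
      calc |∑ k, (munorm μ proj (W.comp (Gk k)) ^ 2 - munorm μ proj (W.comp (Sk k)) ^ 2)|
          ≤ ∑ k, |munorm μ proj (W.comp (Gk k)) ^ 2 - munorm μ proj (W.comp (Sk k)) ^ 2| :=
            Finset.abs_sum_le_sum_abs _ _
      _ ≤ ∑ _k : Fin K, ε * D1 := Finset.sum_le_sum fun k _ => hperk k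
      _ = K * (ε * D1) := by
          rw [Finset.sum_const, Finset.card_univ, Fintype.card_fin, nsmul_eq_mul]
    have htotal : |∑ k, munorm μ proj (W.comp (Gk k)) ^ 2 - munorm μ proj (W.comp G) ^ 2|
        ≤ (K + 1) * (ε * D1) := by
      have h1 : ∑ k, munorm μ proj (W.comp (Sk k)) ^ 2 = munorm μ proj (W.comp S) ^ 2 := hstep
      have h2 := abs_sub_abs_le_abs_sub (0:ℝ) (0:ℝ)
      calc |∑ k, munorm μ proj (W.comp (Gk k)) ^ 2 - munorm μ proj (W.comp G) ^ 2|
          ≤ |∑ k, munorm μ proj (W.comp (Gk k)) ^ 2 - ∑ k, munorm μ proj (W.comp (Sk k)) ^ 2|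
            + |∑ k, munorm μ proj (W.comp (Sk k)) ^ 2 - munorm μ proj (W.comp G) ^ 2| :=
            abs_sub_le _ _ _
      _ ≤ K * (ε * D1)
            + |∑ k, munorm μ proj (W.comp (Sk k)) ^ 2 - munorm μ proj (W.comp G) ^ 2| :=
            add_le_add hsum1 le_rfl
      _ = K * (ε * D1) + |munorm μ proj (W.comp S) ^ 2 - munorm μ proj (W.comp G) ^ 2| := by
            rw [h1]
      _ ≤ K * (ε * D1) + ε * D1 := by
            rw [abs_sub_comm]
            exact add_le_add le_rfl hperg
      _ = (K + 1) * (ε * D1) := by ring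
    refine htotal.trans ?_
    have hεle : ε ≤ η / ((K + 1) * D1 + 1) := min_le_right _ _
    set T : ℝ := (K + 1) * D1 with hTdef
    have hT0 : (0:ℝ) ≤ T := hKD
    have h3 : (K + 1 : ℝ) * (ε * D1) = T * ε := by rw [hTdef]; ring
    rw [h3]
    calc T * ε ≤ T * (η / (T + 1)) := mul_le_mul_of_nonneg_left hεle hT0
    _ ≤ η := by
        rw [mul_div_assoc']
        rw [div_le_iff₀ (by linarith : (0:ℝ) < T + 1)]
        nlinarith
  have h0 : |∑ k, munorm μ proj (W.comp (Gk k)) ^ 2 - munorm μ proj (W.comp G) ^ 2| ≤ 0 := by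
    refine le_of_forall_pos_le_add fun η hη => ?_
    rw [zero_add]
    exact key η hη
  have h1 := le_antisymm h0 (abs_nonneg _)
  exact sub_eq_zero.mp (abs_eq_zero.mp h1)

end MuNorm
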